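/- arXiv:math/0006224 — 5 statements merged into one kernel-verified Lean document; each statement's English description precedes it below -/
import Mathlib

section
/- Let T be a contraction with 1 − TT* of finite rank. Then lim_{n→∞} tr(1 − Tⁿ(T*)ⁿ)/n exists and equals lim_{n→∞} tr((T*)ⁿ Tⁿ (1 − TT*)). -/
open Filter Topology ContinuousLinearMap InnerProductSpace
open scoped InnerProductSpace

/-!
Write the defect `D = 1 - T T†`, a positive operator of finite rank, as `∑ⱼ |uⱼ⟩⟨uⱼ|`.
Then `tr (T†ⁿ Tⁿ D) = gₙ := ∑ⱼ ‖Tⁿ uⱼ‖²`, and telescoping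
`1 - Tⁿ T†ⁿ = ∑_{k<n} Tᵏ D T†ᵏ` gives `tr (1 - Tⁿ T†ⁿ) = ∑_{k<n} gₖ`. Since `‖T‖ ≤ 1`,
`g` is antitone and nonnegative, hence convergent, and so are its Cesàro means, to the same limit.
-/

theorem one_sub_pow_mul_pow_eq_sum {R : Type*} [Ring R] (a b : R) (n : ℕ) :
    1 - a ^ n * b ^ n = ∑ k ∈ Finset.range n, a ^ k * (1 - a * b) * b ^ k := by
  induction n with
  | zero => simp
  | succ n ih =>
    rw [Finset.sum_range_succ, ← ih, pow_succ a, pow_succ' b]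
    noncomm_ring

theorem ContinuousLinearMap.antitone_norm_pow_apply {𝕜 E : Type*} [NontriviallyNormedField 𝕜]
    [SeminormedAddCommGroup E] [NormedSpace 𝕜 E] {T : E →L[𝕜] E} (hT : ‖T‖ ≤ 1) (x : E) :
    Antitone fun n : ℕ => ‖(T ^ n) x‖ :=
  antitone_nat_of_succ_le fun n => by
    rw [pow_succ', mul_apply_eq_comp]
    exact (le_opNorm _ _).trans (mul_le_of_le_one_left (norm_nonneg _) hT)

theorem ContinuousLinearMap.isPositive_one_sub_mul_adjoint {E : Type*}
    [NormedAddCommGroup E] [InnerProductSpace ℂ E] [CompleteSpace E] {T : E →L[ℂ] E}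
    (hT : ‖T‖ ≤ 1) : (1 - T * adjoint T).IsPositive := by
  rw [← nonneg_iff_isPositive, sub_nonneg, ← star_eq_adjoint]
  calc T * star T ≤ algebraMap ℝ _ (‖T‖ ^ 2) := CStarAlgebra.mul_star_le_algebraMap_norm_sq
    _ ≤ 1 := by
      rw [← map_one (algebraMap ℝ (E →L[ℂ] E))]
      exact algebraMap_mono _ (pow_le_one₀ (norm_nonneg T) hT)

theorem ContinuousLinearMap.adjoint_pow {𝕜 E : Type*} [RCLike 𝕜] [NormedAddCommGroup E]
    [InnerProductSpace 𝕜 E] [CompleteSpace E] (A : E →L[𝕜] E) (n : ℕ) :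
    adjoint (A ^ n) = adjoint A ^ n := by
  simp only [← star_eq_adjoint, star_pow]

theorem ContinuousLinearMap.mul_sum_rankOne_self_mul_adjoint {𝕜 E κ : Type*} [RCLike 𝕜]
    [NormedAddCommGroup E] [InnerProductSpace 𝕜 E] [CompleteSpace E] (A : E →L[𝕜] E)
    (s : Finset κ) (u : κ → E) :
    A * (∑ j ∈ s, rankOne 𝕜 (u j) (u j)) * adjoint A =
      ∑ j ∈ s, rankOne 𝕜 (A (u j)) (A (u j)) := by
  simp [Finset.mul_sum, Finset.sum_mul, mul_def, comp_rankOne, rankOne_comp]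

theorem ContinuousLinearMap.IsPositive.exists_eq_sum_rankOne {𝕜 E : Type*} [RCLike 𝕜]
    [NormedAddCommGroup E] [InnerProductSpace 𝕜 E] {D : E →L[𝕜] E} (hD : D.IsPositive)
    [FiniteDimensional 𝕜 (LinearMap.range (D : E →ₗ[𝕜] E))] :
    ∃ (m : ℕ) (u : Fin m → E), D = ∑ i, rankOne 𝕜 (u i) (u i) := by
  set R := LinearMap.range (D : E →ₗ[𝕜] E)
  let S : R →ₗ[𝕜] R := (D : E →ₗ[𝕜] E).restrict fun x _ => LinearMap.mem_range_self _ x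
  have hS : S.toContinuousLinearMap.IsPositive :=
    ⟨fun u v => hD.isSymmetric u v, fun u => hD.2 u⟩
  obtain ⟨m, u, hu⟩ := isPositive_iff_eq_sum_rankOne.mp hS
  refine ⟨m, fun i => u i, ext fun v => ?_⟩
  have hS_apply (r : R) : D r = ∑ i, ⟪u i, r⟫_𝕜 • (u i : E) := by
    simpa [S] using congrArg Subtype.val (DFunLike.congr_fun hu r)
  -- Both sides lie in `R` and have the same inner products with every vector of `R`.
  have key : (⟨D v, LinearMap.mem_range_self _ v⟩ : R) = ∑ i, ⟪(u i : E), v⟫_𝕜 • u i := by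
    refine ext_inner_left 𝕜 fun r => ?_
    calc ⟪r, (⟨D v, _⟩ : R)⟫_𝕜 = ⟪D r, v⟫_𝕜 := (hD.isSymmetric r v).symm
      _ = _ := by
        simp [hS_apply, sum_inner, inner_sum, inner_smul_left, inner_smul_right, mul_comm]
  simpa using congrArg Subtype.val key

theorem HilbertBasis.tsum_inner_sum_rankOne_apply {𝕜 E ι κ : Type*} [RCLike 𝕜]
    [NormedAddCommGroup E] [InnerProductSpace 𝕜 E] (b : HilbertBasis ι 𝕜 E) (s : Finset κ)
    (x y : κ → E) :
    ∑' i, ⟪b i, (∑ r ∈ s, rankOne 𝕜 (x r) (y r)) (b i)⟫_𝕜 = ∑ r ∈ s, ⟪y r, x r⟫_𝕜 := by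
  refine HasSum.tsum_eq ?_
  simp only [sum_apply, rankOne_apply, inner_sum, inner_smul_right]
  exact hasSum_sum fun r _ => b.hasSum_inner_mul_inner (y r) (x r)

section DefectTraces

variable {𝕜 E ι κ : Type*} [RCLike 𝕜] [NormedAddCommGroup E] [InnerProductSpace 𝕜 E]
  [CompleteSpace E] [Fintype κ] (b : HilbertBasis ι 𝕜 E) {T : E →L[𝕜] E} {u : κ → E}

theorem tsum_inner_adjoint_pow_mul_pow_mul_defect_apply
    (hD : 1 - T * adjoint T = ∑ j, rankOne 𝕜 (u j) (u j)) (n : ℕ) :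
    ∑' i, ⟪b i, (adjoint T ^ n * T ^ n * (1 - T * adjoint T)) (b i)⟫_𝕜 =
      ((∑ j, ‖(T ^ n) (u j)‖ ^ 2 : ℝ) : 𝕜) := by
  rw [hD, Finset.mul_sum, ← adjoint_pow]
  simp only [mul_def, comp_rankOne]
  rw [b.tsum_inner_sum_rankOne_apply, RCLike.ofReal_sum]
  refine Finset.sum_congr rfl fun j _ => ?_
  rw [← mul_def, mul_apply_eq_comp, adjoint_inner_right, inner_self_eq_norm_sq_to_K,
    RCLike.ofReal_pow]

theorem tsum_inner_one_sub_pow_mul_adjoint_pow_apply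
    (hD : 1 - T * adjoint T = ∑ j, rankOne 𝕜 (u j) (u j)) (n : ℕ) :
    ∑' i, ⟪b i, (1 - T ^ n * adjoint T ^ n) (b i)⟫_𝕜 =
      ((∑ k ∈ Finset.range n, ∑ j, ‖(T ^ k) (u j)‖ ^ 2 : ℝ) : 𝕜) := by
  rw [one_sub_pow_mul_pow_eq_sum, hD]
  simp only [← adjoint_pow, mul_sum_rankOne_self_mul_adjoint]
  rw [← Finset.sum_product', b.tsum_inner_sum_rankOne_apply, Finset.sum_product,
    RCLike.ofReal_sum]
  refine Finset.sum_congr rfl fun k _ => ?_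
  rw [RCLike.ofReal_sum]
  exact Finset.sum_congr rfl fun j _ => by rw [inner_self_eq_norm_sq_to_K, RCLike.ofReal_pow]

end DefectTraces

theorem arveson_formula_eq_defect_trace_limit {H : Type*} [NormedAddCommGroup H]
    [InnerProductSpace ℂ H] [CompleteSpace H]
    {ι : Type*} (b : HilbertBasis ι ℂ H)
    (T : H →L[ℂ] H) (hT : ‖T‖ ≤ 1)
    (hfin : FiniteDimensional ℂ
      (LinearMap.range (((1 : H →L[ℂ] H) - T * adjoint T : H →L[ℂ] H) : H →ₗ[ℂ] H)))
    (a c : ℕ → ℝ)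
    (ha : ∀ n : ℕ, (a n : ℂ) =
      ∑' i : ι, ⟪b i, ((adjoint T) ^ n * T ^ n * ((1 : H →L[ℂ] H) - T * adjoint T)) (b i)⟫_ℂ)
    (hc : ∀ n : ℕ, (c n : ℂ) =
      ∑' i : ι, ⟪b i, ((1 : H →L[ℂ] H) - T ^ n * (adjoint T) ^ n) (b i)⟫_ℂ) :
    ∃ L : ℝ, Tendsto (fun n : ℕ => c n / n) atTop (𝓝 L) ∧
      Tendsto a atTop (𝓝 L) := by
  obtain ⟨m, u, hD⟩ := (isPositive_one_sub_mul_adjoint hT).exists_eq_sum_rankOne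
  set g : ℕ → ℝ := fun n => ∑ j, ‖(T ^ n) (u j)‖ ^ 2
  have hag : a = g := funext fun n => Complex.ofReal_injective <|
    (ha n).trans (tsum_inner_adjoint_pow_mul_pow_mul_defect_apply b hD n)
  have hcg (n : ℕ) : c n = ∑ k ∈ Finset.range n, g k := Complex.ofReal_injective <|
    (hc n).trans (tsum_inner_one_sub_pow_mul_adjoint_pow_apply b hD n)
  have hg_anti : Antitone g := fun k l hkl => Finset.sum_le_sum fun j _ =>
    pow_le_pow_left₀ (norm_nonneg _) (antitone_norm_pow_apply hT (u j) hkl) 2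
  have hg : Tendsto g atTop (𝓝 (⨅ n, g n)) :=
    tendsto_atTop_ciInf hg_anti ⟨0, by rintro _ ⟨n, rfl⟩; positivity⟩
  refine ⟨_, ?_, by rwa [hag]⟩
  simpa only [hcg, div_eq_inv_mul] using hg.cesaro
end

section
/- With T a contraction and Q = [[T, √(1−TT*)],[0,0]] on H ⊕ range(1−TT*), one has rank(1 − Q*Q) = rank(1 − T*T). -/
/-!
Because `Δ² = 1 - TT*` and `Δ` vanishes on `Kᗮ`, where `K` is the closure of the range of
`1 - TT*`, one gets `QQ* = 1` on `H ⊕ 0`; hence `Q` is a partial isometry and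
`range (1 - Q*Q) ⊆ ker Q`. Compressing `1 - Q*Q` to the first summand gives exactly `1 - T*T`,
so `rank (1 - T*T) ≤ rank (1 - Q*Q)`. Conversely `v ↦ (1 - T*T) v.1` is injective on `ker Q`:
if `T v₁ + Δ v₂ = 0` and `T*T v₁ = v₁`, then `Δ³ v₂ = 0`; as `Δ` is
self-adjoint and injective on `K`, this forces `v₂ = 0` and then `v₁ = 0`.
-/

open ContinuousLinearMap

universe u

namespace LinearMap

variable {K V : Type*} {U W : Type u} [DivisionRing K] [AddCommGroup V] [Module K V]
  [AddCommGroup U] [Module K U] [AddCommGroup W] [Module K W]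

theorem rank_comp_of_disjoint (f : V →ₗ[K] W) (g : W →ₗ[K] U) (h : Disjoint f.range g.ker) :
    (g ∘ₗ f).rank = f.rank := by
  rw [LinearMap.rank, range_comp, ← range_domRestrict]
  exact rank_range_of_injective _ (injective_domRestrict_iff.mpr h)

theorem rank_eq_of_comp_eq_of_disjoint {A : V →ₗ[K] W} {B : U →ₗ[K] U} (p : W →ₗ[K] U)
    (j : U →ₗ[K] V) (hB : p ∘ₗ A ∘ₗ j = B) (h : Disjoint A.range (B ∘ₗ p).ker) :
    A.rank = B.rank := by
  refine le_antisymm ?_ ?_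
  · calc A.rank = (B ∘ₗ p ∘ₗ A).rank := (rank_comp_of_disjoint A (B ∘ₗ p) h).symm
      _ ≤ B.rank := rank_comp_le_left _ _
  · calc B.rank = (p ∘ₗ A ∘ₗ j).rank := by rw [hB]
      _ ≤ (A ∘ₗ j).rank := rank_comp_le_right _ _
      _ ≤ A.rank := rank_comp_le_left _ _

end LinearMap

namespace IsSelfAdjoint

variable {𝕜 E : Type*} [RCLike 𝕜] [NormedAddCommGroup E] [InnerProductSpace 𝕜 E]
  [CompleteSpace E] {A : E →L[𝕜] E}

theorem ker_mul_self (hA : IsSelfAdjoint A) : (A * A).ker = A.ker := by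
  have := ker_adjoint_comp_self A
  rwa [hA.adjoint_eq] at this

theorem apply_eq_zero_of_apply_apply_eq_zero (hA : IsSelfAdjoint A) {v : E} (h : A (A v) = 0) :
    A v = 0 := by
  change v ∈ A.ker
  rw [← hA.ker_mul_self]
  exact h

theorem orthogonal_closure_range_mul_self (hA : IsSelfAdjoint A) :
    (A * A).range.topologicalClosureᗮ = A.ker := by
  have hAA : IsSelfAdjoint (A * A) := by simpa [hA.star_eq] using IsSelfAdjoint.star_mul_self A
  rw [Submodule.orthogonal_closure, orthogonal_range, hAA.adjoint_eq, hA.ker_mul_self]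

end IsSelfAdjoint

section RowOperator

variable {𝕜 H : Type*} [RCLike 𝕜] [NormedAddCommGroup H] [InnerProductSpace 𝕜 H]
  [CompleteSpace H] {T Δ : H →L[𝕜] H} {K : Submodule 𝕜 H}
  {Q : WithLp 2 (H × K) →L[𝕜] WithLp 2 (H × K)}

theorem adjoint_apply_toLp_zero [CompleteSpace K]
    (hQ : ∀ x, Q x = WithLp.toLp 2 (T x.fst + Δ x.snd, 0)) (w : H) :
    adjoint Q (WithLp.toLp 2 (w, 0)) =
      WithLp.toLp 2 (adjoint T w, K.orthogonalProjectionOnto (adjoint Δ w)) := by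
  refine ext_inner_right 𝕜 fun x => ?_
  simp [adjoint_inner_left, hQ, inner_add_right]

theorem apply_adjoint_apply_toLp_zero [CompleteSpace K]
    (hQ : ∀ x, Q x = WithLp.toLp 2 (T x.fst + Δ x.snd, 0))
    (hΔ : IsSelfAdjoint Δ) (hΔsq : Δ * Δ = 1 - T * adjoint T) (hK : Kᗮ ≤ Δ.ker) (w : H) :
    Q (adjoint Q (WithLp.toLp 2 (w, 0))) = WithLp.toLp 2 (w, 0) := by
  have hΔP : Δ (K.starProjection (Δ w)) = Δ (Δ w) := by
    have := hK (K.sub_starProjection_mem_orthogonal (Δ w))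
    rw [LinearMap.mem_ker, coe_coe, map_sub, sub_eq_zero] at this
    exact this.symm
  have hw : T (adjoint T w) + Δ (Δ w) = w := by
    rw [show Δ (Δ w) = w - T (adjoint T w) by simpa using congr($hΔsq w)]
    abel
  simp [adjoint_apply_toLp_zero hQ, hQ, hΔ.adjoint_eq, hΔP, hw]

theorem range_one_sub_adjoint_mul_self_le_ker [CompleteSpace K]
    (hQ : ∀ x, Q x = WithLp.toLp 2 (T x.fst + Δ x.snd, 0))
    (hΔ : IsSelfAdjoint Δ) (hΔsq : Δ * Δ = 1 - T * adjoint T) (hK : Kᗮ ≤ Δ.ker) :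
    (1 - adjoint Q * Q).range ≤ Q.ker := by
  rintro _ ⟨x, rfl⟩
  simp [hQ x, apply_adjoint_apply_toLp_zero hQ hΔ hΔsq hK]

theorem fst_one_sub_adjoint_mul_self_apply_toLp_zero [CompleteSpace K]
    (hQ : ∀ x, Q x = WithLp.toLp 2 (T x.fst + Δ x.snd, 0)) (u : H) :
    ((1 - adjoint Q * Q) (WithLp.toLp 2 (u, 0))).fst = (1 - adjoint T * T) u := by
  simp [hQ, adjoint_apply_toLp_zero hQ]

theorem disjoint_ker_ker_comp_fstₗ
    (hQ : ∀ x, Q x = WithLp.toLp 2 (T x.fst + Δ x.snd, 0))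
    (hΔ : IsSelfAdjoint Δ) (hΔsq : Δ * Δ = 1 - T * adjoint T) (hK : Kᗮ = Δ.ker) :
    Disjoint Q.ker ((1 - adjoint T * T).toLinearMap ∘ₗ WithLp.fstₗ 2 𝕜 H K).ker := by
  rw [Submodule.disjoint_def]
  rintro ⟨v₁, v₂⟩ hQv hv₁
  have hsum : T v₁ + Δ v₂ = 0 := by simpa [hQ] using hQv
  have hfix : adjoint T (T v₁) = v₁ := by
    have : v₁ - adjoint T (T v₁) = 0 := by simpa using hv₁
    exact (sub_eq_zero.mp this).symm
  have hΔv₂' : Δ v₂ = -T v₁ := eq_neg_of_add_eq_zero_right hsum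
  have hΔΔΔ : Δ (Δ (Δ v₂)) = 0 := by
    rw [show Δ (Δ (Δ v₂)) = Δ v₂ - T (adjoint T (Δ v₂)) by simpa using congr($hΔsq (Δ v₂)),
      hΔv₂']
    simp [hfix]
  have hΔv₂ : Δ v₂ = 0 :=
    hΔ.apply_eq_zero_of_apply_apply_eq_zero (hΔ.apply_eq_zero_of_apply_apply_eq_zero hΔΔΔ)
  have hv₂ : v₂ = 0 := by
    have : (v₂ : H) ∈ K ⊓ Kᗮ := ⟨v₂.2, hK ▸ hΔv₂⟩
    simpa [K.inf_orthogonal_eq_bot] using this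
  have hTv₁ : T v₁ = 0 := by rw [← neg_eq_zero, ← hΔv₂', hΔv₂]
  have hv₁ : v₁ = 0 := by rw [← hfix, hTv₁, map_zero]
  simp [hv₁, hv₂]

theorem rank_one_sub_adjoint_mul_self_eq [CompleteSpace K]
    (hQ : ∀ x, Q x = WithLp.toLp 2 (T x.fst + Δ x.snd, 0))
    (hΔ : IsSelfAdjoint Δ) (hΔsq : Δ * Δ = 1 - T * adjoint T) (hK : Kᗮ = Δ.ker) :
    (1 - adjoint Q * Q).rank = (1 - adjoint T * T).rank :=
  LinearMap.rank_eq_of_comp_eq_of_disjoint (WithLp.fstₗ 2 𝕜 H K)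
    ((WithLp.linearEquiv 2 𝕜 (H × K)).symm.toLinearMap ∘ₗ LinearMap.inl 𝕜 H K)
    (LinearMap.ext (fst_one_sub_adjoint_mul_self_apply_toLp_zero hQ))
    ((disjoint_ker_ker_comp_fstₗ hQ hΔ hΔsq hK).mono_left
      (range_one_sub_adjoint_mul_self_le_ker hQ hΔ hΔsq hK.le))

end RowOperator

theorem Q_kernel_defect_rank_general {H : Type*} [NormedAddCommGroup H]
    [InnerProductSpace ℂ H] [CompleteSpace H]
    (T : H →L[ℂ] H)
    (Δ : H →L[ℂ] H) (hΔpos : 0 ≤ Δ)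
    (hΔsq : Δ * Δ = (1 : H →L[ℂ] H) - T * adjoint T)
    (Q : WithLp 2 (H × ((LinearMap.range ((1 : H →L[ℂ] H) - T * adjoint T).toLinearMap).topologicalClosure : Submodule ℂ H)) →L[ℂ]
         WithLp 2 (H × ((LinearMap.range ((1 : H →L[ℂ] H) - T * adjoint T).toLinearMap).topologicalClosure : Submodule ℂ H)))
    (hQ : ∀ x, WithLp.equiv 2 _ (Q x) =
      (T ((WithLp.equiv 2 _) x).1 + Δ (((WithLp.equiv 2 _) x).2 : H), 0)) :
    Module.rank ℂ (LinearMap.range (1 - adjoint Q * Q).toLinearMap) =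
      Module.rank ℂ (LinearMap.range ((1 : H →L[ℂ] H) - adjoint T * T).toLinearMap) := by
  have := (Submodule.isClosed_topologicalClosure
    (LinearMap.range ((1 : H →L[ℂ] H) - T * adjoint T).toLinearMap)).completeSpace_coe
  have hΔ : IsSelfAdjoint Δ := .of_nonneg hΔpos
  refine rank_one_sub_adjoint_mul_self_eq (fun x => ?_) hΔ hΔsq ?_
  · exact congrArg (WithLp.toLp 2) (hQ x)
  · rw [← hΔsq, hΔ.orthogonal_closure_range_mul_self]

theorem Q_kernel_defect_rank {H : Type*} [NormedAddCommGroup H]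
    [InnerProductSpace ℂ H] [CompleteSpace H]
    (T : H →L[ℂ] H) (hT : ‖T‖ ≤ 1)
    (Δ : H →L[ℂ] H) (hΔpos : 0 ≤ Δ)
    (hΔsq : Δ * Δ = (1 : H →L[ℂ] H) - T * adjoint T)
    (Q : WithLp 2 (H × ((LinearMap.range ((1 : H →L[ℂ] H) - T * adjoint T).toLinearMap).topologicalClosure : Submodule ℂ H)) →L[ℂ]
         WithLp 2 (H × ((LinearMap.range ((1 : H →L[ℂ] H) - T * adjoint T).toLinearMap).topologicalClosure : Submodule ℂ H)))
    (hQ : ∀ x, WithLp.equiv 2 _ (Q x) =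
      (T ((WithLp.equiv 2 _) x).1 + Δ (((WithLp.equiv 2 _) x).2 : H), 0)) :
    Module.rank ℂ (LinearMap.range (1 - adjoint Q * Q).toLinearMap) =
      Module.rank ℂ (LinearMap.range ((1 : H →L[ℂ] H) - adjoint T * T).toLinearMap) :=
  Q_kernel_defect_rank_general T Δ hΔpos hΔsq Q hQ
end

section
/- Let U be unitary on K, and let L, L′ be wandering subspaces for U with L finite-dimensional. If M(L′) = K (the iterates UⁿL′ span all of K), then dim L ≤ dim L′. -/
open ContinuousLinearMap
open scoped InnerProductSpace

/-!
Choose orthonormal bases `e₁, …, e_m` of `L` and `f₁, …, f_k` of `L'`. The vectors `Uⁿ fⱼ` form a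
Hilbert basis of `K` and the vectors `Uⁿ eᵢ` are orthonormal. Sum `|⟪Uⁿ fⱼ, eᵢ⟫|²` over all
`i, n, j` (in `ℝ≥0∞`, so that the order of summation is immaterial). Parseval's identity in `(n, j)`
gives `∑ᵢ ‖eᵢ‖² = m`, while `|⟪Uⁿ fⱼ, eᵢ⟫| = |⟪U⁻ⁿ eᵢ, fⱼ⟫|` and Bessel's inequality in `(n, i)` bound
the same sum by `∑ⱼ ‖fⱼ‖² = k`. An infinite-dimensional `L'` leaves nothing to prove.
-/

open scoped ENNReal
open Submodule

section InnerProductSpace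

variable {𝕜 E ι : Type*} [RCLike 𝕜] [NormedAddCommGroup E] [InnerProductSpace 𝕜 E]

lemma enorm_sq_eq_ofReal (x : E) : ‖x‖ₑ ^ 2 = ENNReal.ofReal (‖x‖ ^ 2) := by
  rw [ENNReal.ofReal_pow (norm_nonneg _), ofReal_norm]

lemma tsum_enorm_sq_eq_ofReal_tsum {f : ι → 𝕜} (hf : Summable fun i => ‖f i‖ ^ 2) :
    ∑' i, ‖f i‖ₑ ^ 2 = ENNReal.ofReal (∑' i, ‖f i‖ ^ 2) := by
  rw [ENNReal.ofReal_tsum_of_nonneg (fun _ => by positivity) hf]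
  simp_rw [enorm_sq_eq_ofReal]

lemma Orthonormal.tsum_enorm_inner_sq_le {v : ι → E} (hv : Orthonormal 𝕜 v) (x : E) :
    ∑' i, ‖⟪v i, x⟫_𝕜‖ₑ ^ 2 ≤ ‖x‖ₑ ^ 2 := by
  rw [tsum_enorm_sq_eq_ofReal_tsum (hv.inner_products_summable x), enorm_sq_eq_ofReal]
  exact ENNReal.ofReal_le_ofReal (hv.tsum_inner_products_le x)

lemma HilbertBasis.hasSum_norm_inner_sq (b : HilbertBasis ι 𝕜 E) (x : E) :
    HasSum (fun i => ‖⟪b i, x⟫_𝕜‖ ^ 2) (‖x‖ ^ 2) := by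
  simpa [b.repr_apply_apply] using lp.hasSum_norm (p := 2) (by norm_num) (b.repr x)

lemma HilbertBasis.tsum_enorm_inner_sq (b : HilbertBasis ι 𝕜 E) (x : E) :
    ∑' i, ‖⟪b i, x⟫_𝕜‖ₑ ^ 2 = ‖x‖ₑ ^ 2 := by
  have h := b.hasSum_norm_inner_sq x
  rw [tsum_enorm_sq_eq_ofReal_tsum h.summable, h.tsum_eq, enorm_sq_eq_ofReal]

lemma OrthonormalBasis.span_range_coe [Fintype ι] {L : Submodule 𝕜 E} (b : OrthonormalBasis ι 𝕜 L) :
    span 𝕜 (Set.range fun i => (b i : E)) = L := by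
  rw [show (fun i => (b i : E)) = L.subtype ∘ b from rfl, Set.range_comp, ← map_span,
    show span 𝕜 (Set.range b) = ⊤ by simpa using b.toBasis.span_eq, Submodule.map_top,
    range_subtype]

end InnerProductSpace

section Unitary

variable {𝕜 K : Type*} [RCLike 𝕜] [NormedAddCommGroup K] [InnerProductSpace 𝕜 K] [CompleteSpace K]

def IsWandering (U : unitary (K →L[𝕜] K)) (L : Submodule 𝕜 K) : Prop :=
  ∀ i j : ℤ, i ≠ j →
    ∀ x ∈ L.map (((U ^ i : unitary (K →L[𝕜] K)) : K →L[𝕜] K) : K →ₗ[𝕜] K),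
    ∀ y ∈ L.map (((U ^ j : unitary (K →L[𝕜] K)) : K →L[𝕜] K) : K →ₗ[𝕜] K), ⟪x, y⟫_𝕜 = 0

variable (U : unitary (K →L[𝕜] K)) {ι κ : Type*}

lemma IsWandering.orthonormal_translates {L : Submodule 𝕜 K} (hL : IsWandering U L) {e : ι → K}
    (he : Orthonormal 𝕜 e) (heL : ∀ i, e i ∈ L) :
    Orthonormal 𝕜 fun p : ℤ × ι => (↑(U ^ p.1) : K →L[𝕜] K) (e p.2) := by
  classical
  rw [orthonormal_iff_ite] at he ⊢
  rintro ⟨n, i⟩ ⟨n', i'⟩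
  rcases eq_or_ne n n' with rfl | hn
  · simpa [Unitary.inner_map_map] using he i i'
  · rw [if_neg (by simp [hn])]
    exact hL n n' hn _ (mem_map_of_mem (heL i)) _ (mem_map_of_mem (heL i'))

lemma span_range_translates (e : ι → K) :
    span 𝕜 (Set.range fun p : ℤ × ι => (↑(U ^ p.1) : K →L[𝕜] K) (e p.2)) =
      ⨆ n : ℤ, (span 𝕜 (Set.range e)).map ((↑(U ^ n) : K →L[𝕜] K) : K →ₗ[𝕜] K) := by
  have : (Set.range fun p : ℤ × ι => (↑(U ^ p.1) : K →L[𝕜] K) (e p.2)) =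
      ⋃ n : ℤ, (↑(U ^ n) : K →L[𝕜] K) '' Set.range e := by
    ext; simp
  simp_rw [this, span_iUnion, map_span]
  rfl

lemma enorm_inner_zpow_apply_comm (n : ℤ) (x y : K) :
    ‖⟪(↑(U ^ n) : K →L[𝕜] K) x, y⟫_𝕜‖ₑ = ‖⟪(↑(U ^ (-n)) : K →L[𝕜] K) y, x⟫_𝕜‖ₑ := by
  have hy : y = (↑(U ^ n) : K →L[𝕜] K) ((↑(U ^ (-n)) : K →L[𝕜] K) y) := by
    change y = ((U ^ n * U ^ (-n) : unitary (K →L[𝕜] K)) : K →L[𝕜] K) y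
    rw [← zpow_add, add_neg_cancel, zpow_zero]
    rfl
  conv_lhs => rw [hy, Unitary.inner_map_map]
  rw [← ofReal_norm, norm_inner_symm, ofReal_norm]

theorem card_le_card_of_translates [Fintype ι] [Fintype κ] {e : ι → K} {f : κ → K}
    (he : Orthonormal 𝕜 fun p : ℤ × ι => (↑(U ^ p.1) : K →L[𝕜] K) (e p.2))
    (b : HilbertBasis (ℤ × κ) 𝕜 K)
    (hb : ⇑b = fun p : ℤ × κ => (↑(U ^ p.1) : K →L[𝕜] K) (f p.2)) :
    Fintype.card ι ≤ Fintype.card κ := by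
  have he_norm (i : ι) : ‖e i‖ₑ = 1 := by
    simpa [Unitary.norm_map] using congrArg ENNReal.ofReal (he.1 (0, i))
  have hf : Orthonormal 𝕜 fun p : ℤ × κ => (↑(U ^ p.1) : K →L[𝕜] K) (f p.2) :=
    hb ▸ b.orthonormal
  have hf_norm (j : κ) : ‖f j‖ₑ = 1 := by
    simpa [Unitary.norm_map] using congrArg ENNReal.ofReal (hf.1 (0, j))
  have he' : Orthonormal 𝕜 fun p : ℤ × ι => (↑(U ^ (-p.1)) : K →L[𝕜] K) (e p.2) :=
    he.comp (Prod.map Neg.neg id) (neg_injective.prodMap Function.injective_id)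
  suffices (Fintype.card ι : ℝ≥0∞) ≤ Fintype.card κ by exact_mod_cast this
  calc (Fintype.card ι : ℝ≥0∞) = ∑' i, ‖e i‖ₑ ^ 2 := by simp [he_norm]
    _ = ∑' i, ∑' p : ℤ × κ, ‖⟪b p, e i⟫_𝕜‖ₑ ^ 2 := by simp_rw [b.tsum_enorm_inner_sq]
    _ = ∑' j, ∑' n, ∑' i, ‖⟪b (n, j), e i⟫_𝕜‖ₑ ^ 2 := by
      rw [ENNReal.tsum_comm, ENNReal.tsum_prod', ENNReal.tsum_comm]
    _ = ∑' j, ∑' p : ℤ × ι, ‖⟪(↑(U ^ (-p.1)) : K →L[𝕜] K) (e p.2), f j⟫_𝕜‖ₑ ^ 2 := by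
      refine tsum_congr fun j => ?_
      rw [ENNReal.tsum_prod']
      refine tsum_congr fun n => tsum_congr fun i => ?_
      rw [hb, enorm_inner_zpow_apply_comm]
    _ ≤ ∑' j, ‖f j‖ₑ ^ 2 := ENNReal.tsum_le_tsum fun j => he'.tsum_enorm_inner_sq_le (f j)
    _ = Fintype.card κ := by simp [hf_norm]

theorem IsWandering.finrank_le {L L' : Submodule 𝕜 K} [FiniteDimensional 𝕜 L]
    [FiniteDimensional 𝕜 L'] (hL : IsWandering U L) (hL' : IsWandering U L')
    (hspan : (⨆ n : ℤ, L'.map ((↑(U ^ n) : K →L[𝕜] K) : K →ₗ[𝕜] K)).topologicalClosure = ⊤) :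
    Module.finrank 𝕜 L ≤ Module.finrank 𝕜 L' := by
  let e := stdOrthonormalBasis 𝕜 L
  let f := stdOrthonormalBasis 𝕜 L'
  have he := hL.orthonormal_translates U (e.orthonormal.comp_linearIsometry L.subtypeₗᵢ)
    fun i => (e i).2
  have hf := hL'.orthonormal_translates U (f.orthonormal.comp_linearIsometry L'.subtypeₗᵢ)
    fun j => (f j).2
  have hdense : ⊤ ≤ (span 𝕜 (Set.range
      fun p : ℤ × _ => (↑(U ^ p.1) : K →L[𝕜] K) (f p.2 : K))).topologicalClosure := by
    rw [span_range_translates U (fun j => (f j : K)), f.span_range_coe, hspan]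
  simpa using card_le_card_of_translates U he (HilbertBasis.mk hf hdense)
    (HilbertBasis.coe_mk hf hdense)

end Unitary

theorem wandering_dim_le {K : Type*} [NormedAddCommGroup K]
    [InnerProductSpace ℂ K] [CompleteSpace K]
    (U : unitary (K →L[ℂ] K)) (L L' : Submodule ℂ K)
    (hLfin : FiniteDimensional ℂ L)
    (hLwander : ∀ i j : ℤ, i ≠ j →
      ∀ x ∈ Submodule.map (((U ^ i : unitary (K →L[ℂ] K)) : K →L[ℂ] K) : K →ₗ[ℂ] K) L,
      ∀ y ∈ Submodule.map (((U ^ j : unitary (K →L[ℂ] K)) : K →L[ℂ] K) : K →ₗ[ℂ] K) L,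
        ⟪x, y⟫_ℂ = 0)
    (hL'wander : ∀ i j : ℤ, i ≠ j →
      ∀ x ∈ Submodule.map (((U ^ i : unitary (K →L[ℂ] K)) : K →L[ℂ] K) : K →ₗ[ℂ] K) L',
      ∀ y ∈ Submodule.map (((U ^ j : unitary (K →L[ℂ] K)) : K →L[ℂ] K) : K →ₗ[ℂ] K) L',
        ⟪x, y⟫_ℂ = 0)
    (hspan : (⨆ n : ℤ, Submodule.map (((U ^ n : unitary (K →L[ℂ] K)) : K →L[ℂ] K) : K →ₗ[ℂ] K) L').topologicalClosure = ⊤) :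
    Module.rank ℂ L ≤ Module.rank ℂ L' := by
  by_cases hL'fin : FiniteDimensional ℂ L'
  · rw [← Module.finrank_eq_rank, ← Module.finrank_eq_rank]
    exact_mod_cast IsWandering.finrank_le U hLwander hL'wander hspan
  · exact (Module.rank_lt_aleph0 ℂ L).le.trans
      (not_lt.1 fun h => hL'fin (Module.rank_lt_aleph0_iff.1 h))
end

section
/- If T is a bounded operator on a Hilbert space such that 1 − T*T has finite rank, then T has closed range. -/
/-!
On the kernel of `1 - T†T` we have `T†T = 1`, so `T` is isometric there and maps this closed
subspace onto a closed subspace. The kernel has finite codimension because the range of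
`1 - T†T` is finite-dimensional, and a closed subspace plus a finite-dimensional one is closed.
-/

open ContinuousLinearMap

theorem ContinuousLinearMap.norm_map_of_adjoint_apply_apply_eq {𝕜 E F : Type*} [RCLike 𝕜]
    [NormedAddCommGroup E] [InnerProductSpace 𝕜 E] [CompleteSpace E]
    [NormedAddCommGroup F] [InnerProductSpace 𝕜 F] [CompleteSpace F]
    (T : E →L[𝕜] F) {x : E} (hx : adjoint T (T x) = x) : ‖T x‖ = ‖x‖ := by
  have h := T.apply_norm_sq_eq_inner_adjoint_left x
  rw [comp_apply, hx, inner_self_eq_norm_sq] at h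
  exact (sq_eq_sq₀ (norm_nonneg _) (norm_nonneg _)).mp h

theorem ContinuousLinearMap.isClosed_map_of_norm_map {𝕜 E F : Type*} [NontriviallyNormedField 𝕜]
    [NormedAddCommGroup E] [NormedSpace 𝕜 E] [NormedAddCommGroup F] [NormedSpace 𝕜 F]
    (f : E →L[𝕜] F) (s : Submodule 𝕜 E) [CompleteSpace s] (hf : ∀ x ∈ s, ‖f x‖ = ‖x‖) :
    IsClosed (s.map (f : E →ₗ[𝕜] F) : Set F) := by
  have hiso : Isometry (f ∘L s.subtypeL) :=
    AddMonoidHomClass.isometry_of_norm _ fun x => hf x x.2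
  convert hiso.isClosedEmbedding.isClosed_range
  ext
  simp

theorem closed_range_of_finite_defect {H : Type*} [NormedAddCommGroup H]
    [InnerProductSpace ℂ H] [CompleteSpace H]
    (T : H →L[ℂ] H)
    (hfin : FiniteDimensional ℂ
      (LinearMap.range (((1 : H →L[ℂ] H) - adjoint T * T : H →L[ℂ] H) : H →ₗ[ℂ] H))) :
    IsClosed (LinearMap.range (T : H →ₗ[ℂ] H) : Set H) := by
  set K : H →L[ℂ] H := 1 - adjoint T * T
  have hcofg : (LinearMap.ker (K : H →ₗ[ℂ] H)).CoFG :=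
    Submodule.range_fg_iff_ker_cofg.mp (Module.Finite.iff_fg.mp hfin)
  have : CompleteSpace (LinearMap.ker (K : H →ₗ[ℂ] H)) := K.isClosed_ker.completeSpace_coe
  have hisometric : ∀ x ∈ LinearMap.ker (K : H →ₗ[ℂ] H), ‖T x‖ = ‖x‖ := fun x hx =>
    T.norm_map_of_adjoint_apply_apply_eq (sub_eq_zero.mp (by simpa [K] using hx)).symm
  exact LinearMap.isClosed_range_of_isClosed_map_of_finiteDimensional_quotient
    (T.isClosed_map_of_norm_map _ hisometric)
end

section
/- If T has finite-dimensional kernel and cokernel and 1−T*T, 1−TT* are positive finite-rank operators, then dim range(1−T*T) − dim range(1−TT*) = dim ker T − dim ker T*. -/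
/-!
`T` maps the defect space `D = ran (1 - T†T)` into `D' = ran (1 - TT†)`, since
`T (1 - T†T) = (1 - TT†) T`, and symmetrically `T†` maps `D'` into `D`; moreover `ker T ⊆ D` and
`ker T† ⊆ D'`. As `ker (T†T) = ker T` and `ker (TT†) = ker T†`, each of the restrictions
`T : D → D'` and `T† : D' → D` has rank at most that of the other, so the two ranks agree, and
rank–nullity on the finite-dimensional spaces `D` and `D'` gives
`dim D - dim ker T = dim D' - dim ker T†`.
-/

open ContinuousLinearMap Module LinearMap

namespace LinearMap

variable {K V W : Type*} [DivisionRing K] [AddCommGroup V] [Module K V] [AddCommGroup W]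
  [Module K W]

theorem finrank_range_comp_eq_of_ker_comp_eq [FiniteDimensional K V] {f : V →ₗ[K] W}
    {g : W →ₗ[K] V} (h : ker (g ∘ₗ f) = ker f) :
    finrank K (range (g ∘ₗ f)) = finrank K (range f) := by
  have hgf := (g ∘ₗ f).finrank_range_add_finrank_ker
  have hf := f.finrank_range_add_finrank_ker
  rw [h] at hgf
  omega

theorem finrank_range_eq_of_ker_comp_eq [FiniteDimensional K V] [FiniteDimensional K W]
    {f : V →ₗ[K] W} {g : W →ₗ[K] V} (hgf : ker (g ∘ₗ f) = ker f) (hfg : ker (f ∘ₗ g) = ker g) :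
    finrank K (range f) = finrank K (range g) :=
  le_antisymm
    (finrank_range_comp_eq_of_ker_comp_eq hgf ▸ Submodule.finrank_mono (range_comp_le_range f g))
    (finrank_range_comp_eq_of_ker_comp_eq hfg ▸ Submodule.finrank_mono (range_comp_le_range g f))

theorem finrank_sub_finrank_ker_eq_of_ker_comp_eq [FiniteDimensional K V] [FiniteDimensional K W]
    {f : V →ₗ[K] W} {g : W →ₗ[K] V} (hgf : ker (g ∘ₗ f) = ker f) (hfg : ker (f ∘ₗ g) = ker g) :
    (finrank K V : ℤ) - finrank K (ker f) = finrank K W - finrank K (ker g) := by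
  have hf := f.finrank_range_add_finrank_ker
  have hg := g.finrank_range_add_finrank_ker
  have := finrank_range_eq_of_ker_comp_eq hgf hfg
  omega

theorem finrank_ker_restrict_of_ker_le {p : Submodule K V} {q : Submodule K W} {f : V →ₗ[K] W}
    (hf : ∀ x ∈ p, f x ∈ q) (h : ker f ≤ p) : finrank K (ker (f.restrict hf)) = finrank K (ker f) := by
  rw [ker_restrict]
  exact (Submodule.comapSubtypeEquivOfLe h).finrank_eq

theorem ker_restrict_comp_restrict_eq {p : Submodule K V} {q : Submodule K W} {f : V →ₗ[K] W}
    {g : W →ₗ[K] V} (hf : ∀ x ∈ p, f x ∈ q) (hg : ∀ y ∈ q, g y ∈ p) (h : ker (g ∘ₗ f) = ker f) :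
    ker (g.restrict hg ∘ₗ f.restrict hf) = ker (f.restrict hf) := by
  rw [← restrict_comp hf hg, ker_restrict hf, ← h]
  exact ker_restrict _

theorem finrank_sub_finrank_ker_eq_of_mapsTo {p : Submodule K V} {q : Submodule K W}
    [FiniteDimensional K p] [FiniteDimensional K q] {f : V →ₗ[K] W} {g : W →ₗ[K] V}
    (hf : ∀ x ∈ p, f x ∈ q) (hg : ∀ y ∈ q, g y ∈ p) (hfp : ker f ≤ p) (hgq : ker g ≤ q)
    (hgf : ker (g ∘ₗ f) = ker f) (hfg : ker (f ∘ₗ g) = ker g) :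
    (finrank K p : ℤ) - finrank K (ker f) = finrank K q - finrank K (ker g) := by
  rw [← finrank_ker_restrict_of_ker_le hf hfp, ← finrank_ker_restrict_of_ker_le hg hgq]
  exact finrank_sub_finrank_ker_eq_of_ker_comp_eq (ker_restrict_comp_restrict_eq hf hg hgf)
    (ker_restrict_comp_restrict_eq hg hf hfg)

end LinearMap

namespace ContinuousLinearMap

variable {𝕜 E F : Type*} [RCLike 𝕜] [NormedAddCommGroup E] [NormedAddCommGroup F]
  [InnerProductSpace 𝕜 E] [InnerProductSpace 𝕜 F] [CompleteSpace E] [CompleteSpace F]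

/-- When it is finite-dimensional, this is the defect space `ran D_T`, `D_T = (1 - T†T)^{1/2}`. -/
noncomputable def defectSpace (T : E →L[𝕜] F) : Submodule 𝕜 E :=
  range ((1 - adjoint T ∘L T : E →L[𝕜] E) : E →ₗ[𝕜] E)

theorem defectSpace_adjoint (T : E →L[𝕜] F) :
    defectSpace (adjoint T) = range ((1 - T ∘L adjoint T : F →L[𝕜] F) : F →ₗ[𝕜] F) := by
  rw [defectSpace, adjoint_adjoint]

theorem ker_le_defectSpace (T : E →L[𝕜] F) : ker (T : E →ₗ[𝕜] F) ≤ defectSpace T := by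
  intro x hx
  refine ⟨x, ?_⟩
  simp_all

theorem apply_mem_defectSpace_adjoint (T : E →L[𝕜] F) {x : E} (hx : x ∈ defectSpace T) :
    T x ∈ defectSpace (adjoint T) := by
  obtain ⟨z, rfl⟩ := hx
  rw [defectSpace_adjoint]
  exact ⟨T z, by simp⟩

theorem adjoint_apply_mem_defectSpace (T : E →L[𝕜] F) {y : F} (hy : y ∈ defectSpace (adjoint T)) :
    adjoint T y ∈ defectSpace T := by
  simpa using apply_mem_defectSpace_adjoint (adjoint T) hy

end ContinuousLinearMap

theorem defect_rank_difference_eq_index_general {H : Type*} [NormedAddCommGroup H]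
    [InnerProductSpace ℂ H] [CompleteSpace H]
    (T : H →L[ℂ] H)
    (hfin1 : FiniteDimensional ℂ
      (LinearMap.range (((1 : H →L[ℂ] H) - adjoint T * T : H →L[ℂ] H) : H →ₗ[ℂ] H)))
    (hfin2 : FiniteDimensional ℂ
      (LinearMap.range (((1 : H →L[ℂ] H) - T * adjoint T : H →L[ℂ] H) : H →ₗ[ℂ] H))) :
    (Module.finrank ℂ (LinearMap.range (((1 : H →L[ℂ] H) - adjoint T * T : H →L[ℂ] H) : H →ₗ[ℂ] H)) : ℤ) -
        Module.finrank ℂ (LinearMap.range (((1 : H →L[ℂ] H) - T * adjoint T : H →L[ℂ] H) : H →ₗ[ℂ] H)) =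
      (Module.finrank ℂ (LinearMap.ker (T : H →ₗ[ℂ] H)) : ℤ) -
        Module.finrank ℂ (LinearMap.ker (adjoint T : H →ₗ[ℂ] H)) := by
  have : FiniteDimensional ℂ (defectSpace T) := hfin1
  have : FiniteDimensional ℂ (defectSpace (adjoint T)) := by rw [defectSpace_adjoint]; exact hfin2
  have key := finrank_sub_finrank_ker_eq_of_mapsTo
    (fun _ ↦ T.apply_mem_defectSpace_adjoint) (fun _ ↦ T.adjoint_apply_mem_defectSpace)
    T.ker_le_defectSpace (adjoint T).ker_le_defectSpace
    T.ker_adjoint_comp_self T.ker_self_comp_adjoint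
  rw [mul_def, mul_def, ← defectSpace_adjoint]
  change (finrank ℂ (defectSpace T) : ℤ) - _ = _
  omega

theorem defect_rank_difference_eq_index {H : Type*} [NormedAddCommGroup H]
    [InnerProductSpace ℂ H] [CompleteSpace H]
    (T : H →L[ℂ] H) (hT : ‖T‖ ≤ 1)
    (hker : FiniteDimensional ℂ (LinearMap.ker (T : H →ₗ[ℂ] H)))
    (hcoker : FiniteDimensional ℂ (LinearMap.ker (adjoint T : H →ₗ[ℂ] H)))
    (hfin1 : FiniteDimensional ℂ
      (LinearMap.range (((1 : H →L[ℂ] H) - adjoint T * T : H →L[ℂ] H) : H →ₗ[ℂ] H)))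
    (hfin2 : FiniteDimensional ℂ
      (LinearMap.range (((1 : H →L[ℂ] H) - T * adjoint T : H →L[ℂ] H) : H →ₗ[ℂ] H))) :
    (Module.finrank ℂ (LinearMap.range (((1 : H →L[ℂ] H) - adjoint T * T : H →L[ℂ] H) : H →ₗ[ℂ] H)) : ℤ) -
        Module.finrank ℂ (LinearMap.range (((1 : H →L[ℂ] H) - T * adjoint T : H →L[ℂ] H) : H →ₗ[ℂ] H)) =
      (Module.finrank ℂ (LinearMap.ker (T : H →ₗ[ℂ] H)) : ℤ) -
        Module.finrank ℂ (LinearMap.ker (adjoint T : H →ₗ[ℂ] H)) :=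
  defect_rank_difference_eq_index_general T hfin1 hfin2
end
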